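/- Let m_n = (3/2)n(n+3) for integers n ≥ 3. With MS(n) = 4^{n+1}/ω_n^{1/n}, C(n,m) = max{ (1/n)(m ω_m / ((n+m) ω_{n+m}))^{1/n}, 1/(n ω_n^{1/n}) } and S(n,2) = π^{-1/2} (n-1)/(n(n-2)) · (Γ(n)/Γ(n/2))^{1/n}, one has lim_{n→∞} MS(n)/C(n, m_n) = +∞ and lim_{n→∞} C(n, m_n)/S(n,2) = +∞. -/

import Mathlib

open Real Filter

/-- The Lebesgue volume of the unit ball in `ℝ^k`. -/
noncomputable def ballVol (k : ℕ) : ℝ := Real.pi ^ ((k : ℝ) / 2) / Real.Gamma ((k : ℝ) / 2 + 1)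

/-- The Michael–Simon constant. -/
noncomputable def MS (n : ℕ) : ℝ := 4 ^ (n + 1) / ballVol n ^ ((1 : ℝ) / n)

/-- The Brendle constant. -/
noncomputable def Cnm (n m : ℕ) : ℝ :=
  max ((1 / (n : ℝ)) * ((m : ℝ) * ballVol m / (((n : ℝ) + m) * ballVol (n + m))) ^ ((1 : ℝ) / n))
    (1 / ((n : ℝ) * ballVol n ^ ((1 : ℝ) / n)))

/-- The minimal-submanifold Sobolev constant at `p = 2`. -/
noncomputable def S2 (n : ℕ) : ℝ :=
  Real.pi ^ (-(1 : ℝ) / 2) * ((n : ℝ) - 1) / ((n : ℝ) * ((n : ℝ) - 2)) *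
    (Real.Gamma (n : ℝ) / Real.Gamma ((n : ℝ) / 2)) ^ ((1 : ℝ) / n)

/-- The Nash embedding codimension bound for compact manifolds: `m_n = (3/2) n (n+3)`. -/
def nashBound (n : ℕ) : ℕ := 3 * n * (n + 3) / 2

/-!
Log-convexity of `Γ` gives `Γ x (x - 1) ^ y ≤ Γ (x + y) ≤ Γ x (x + y) ^ y`. Applied to
`ω_m / ω_{n+m} = Γ (m/2 + 1 + n/2) / (Γ (m/2 + 1) π ^ (n/2))`, this makes the `n`-th root of that
ratio comparable to `√m`, which is of order `n` for `m = m_n`; hence `1/6 ≤ C(n, m_n) ≤ 1`.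
On the other hand `Γ (n/2 + 1) ≥ 1` gives `ω_n ^ (1/n) ≤ √π`, so `MS(n) ≥ 4 ^ (n+1) / √π`, and
`Γ n / Γ (n/2) ≤ n ^ (n/2)` gives `S(n,2) ≤ 2 / √n`.
-/

namespace Real

/- Both bounds compare slopes of the convex function `log ∘ Gamma` across adjacent intervals, the
slope over a unit interval `[t, t + 1]` being `log t`. -/
theorem Gamma_add_le_mul_rpow {x y : ℝ} (hx : 0 < x) (hy : 0 ≤ y) :
    Gamma (x + y) ≤ Gamma x * (x + y) ^ y := by
  rcases hy.eq_or_lt with rfl | hy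
  · simp
  have hxy : 0 < x + y := by linarith
  have hslope := convexOn_log_Gamma.slope_mono_adjacent (Set.mem_Ioi.2 hx)
    (Set.mem_Ioi.2 (by linarith : 0 < x + y + 1)) (by linarith : x < x + y) (by linarith)
  simp only [Function.comp_apply, Gamma_add_one hxy.ne',
    log_mul hxy.ne' (Gamma_pos_of_pos hxy).ne', add_sub_cancel_left, div_one,
    add_sub_cancel_right] at hslope
  rw [← log_le_log_iff (Gamma_pos_of_pos hxy) (by positivity), log_mul (Gamma_pos_of_pos hx).ne'
    (by positivity), log_rpow hxy]
  rw [div_le_iff₀ hy] at hslope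
  linarith

theorem Gamma_mul_rpow_le_Gamma_add {x y : ℝ} (hx : 1 < x) (hy : 0 ≤ y) :
    Gamma x * (x - 1) ^ y ≤ Gamma (x + y) := by
  rcases hy.eq_or_lt with rfl | hy
  · simp
  have hx1 : 0 < x - 1 := by linarith
  have hslope := convexOn_log_Gamma.slope_mono_adjacent (Set.mem_Ioi.2 hx1)
    (Set.mem_Ioi.2 (by linarith : 0 < x + y)) (by linarith : x - 1 < x) (by linarith)
  have hlog : log (Gamma x) - log (Gamma (x - 1)) = log (x - 1) := by
    rw [sub_eq_iff_eq_add, ← log_mul hx1.ne' (Gamma_pos_of_pos hx1).ne', ← Gamma_add_one hx1.ne',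
      sub_add_cancel]
  simp only [Function.comp_apply, sub_sub_cancel, div_one, add_sub_cancel_left, hlog] at hslope
  rw [← log_le_log_iff (by positivity) (Gamma_pos_of_pos (by linarith)),
    log_mul (Gamma_pos_of_pos (by linarith)).ne' (by positivity), log_rpow hx1]
  rw [le_div_iff₀ hy] at hslope
  linarith

theorem rpow_div_two_rpow_one_div {a : ℝ} (ha : 0 ≤ a) {n : ℕ} (hn : n ≠ 0) :
    (a ^ ((n : ℝ) / 2)) ^ ((1 : ℝ) / n) = √a := by
  rw [← rpow_mul ha, sqrt_eq_rpow]
  congr 1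
  field_simp

theorem sqrt_le_rpow_one_div {a b : ℝ} (ha : 0 ≤ a) {n : ℕ} (hn : n ≠ 0)
    (h : a ^ ((n : ℝ) / 2) ≤ b) : √a ≤ b ^ ((1 : ℝ) / n) := by
  rw [← rpow_div_two_rpow_one_div ha hn]
  exact rpow_le_rpow (by positivity) h (by positivity)

theorem rpow_one_div_le_sqrt {a b : ℝ} (ha : 0 ≤ a) (hb : 0 ≤ b) {n : ℕ} (hn : n ≠ 0)
    (h : b ≤ a ^ ((n : ℝ) / 2)) : b ^ ((1 : ℝ) / n) ≤ √a := by
  rw [← rpow_div_two_rpow_one_div ha hn]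
  exact rpow_le_rpow hb h (by positivity)

end Real

lemma ballVol_pos (k : ℕ) : 0 < ballVol k :=
  div_pos (rpow_pos_of_pos pi_pos _) (Gamma_pos_of_pos (by positivity))

lemma ballVol_rpow_le_sqrt_pi {n : ℕ} (hn : 2 ≤ n) : ballVol n ^ ((1 : ℝ) / n) ≤ √π := by
  have hΓ : 1 ≤ Gamma ((n : ℝ) / 2 + 1) := by
    have h2 : (2 : ℝ) ≤ (n : ℝ) / 2 + 1 := by
      have : (2 : ℝ) ≤ n := by exact_mod_cast hn
      linarith
    calc (1 : ℝ) = Gamma 2 := Gamma_two.symm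
      _ ≤ Gamma ((n : ℝ) / 2 + 1) :=
        Gamma_strictMonoOn_Ici.monotoneOn Set.self_mem_Ici (Set.mem_Ici.2 h2) h2
  exact rpow_one_div_le_sqrt pi_pos.le (ballVol_pos n).le (by omega)
    (div_le_self (by positivity) hΓ)

lemma inv_sqrt_le_ballVol_rpow {n : ℕ} (hn : 2 ≤ n) : (√n)⁻¹ ≤ ballVol n ^ ((1 : ℝ) / n) := by
  have hn' : (2 : ℝ) ≤ n := by exact_mod_cast hn
  have hΓ : Gamma ((n : ℝ) / 2 + 1) ≤ (n : ℝ) ^ ((n : ℝ) / 2) := by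
    calc Gamma ((n : ℝ) / 2 + 1) = Gamma (1 + n / 2) := by rw [add_comm]
      _ ≤ Gamma 1 * (1 + n / 2) ^ ((n : ℝ) / 2) := Gamma_add_le_mul_rpow one_pos (by positivity)
      _ ≤ (n : ℝ) ^ ((n : ℝ) / 2) := by
        rw [Gamma_one, one_mul]
        gcongr
        linarith
  rw [← sqrt_inv]
  refine sqrt_le_rpow_one_div (by positivity) (by omega) ?_
  calc (n : ℝ)⁻¹ ^ ((n : ℝ) / 2) = 1 / (n : ℝ) ^ ((n : ℝ) / 2) := by
        rw [inv_rpow (by positivity), one_div]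
    _ ≤ 1 / Gamma ((n : ℝ) / 2 + 1) :=
        one_div_le_one_div_of_le (Gamma_pos_of_pos (by positivity)) hΓ
    _ ≤ ballVol n := by
        unfold ballVol
        gcongr
        exact one_le_rpow (by linarith [pi_gt_three]) (by positivity)

lemma ballVol_div_ballVol_add (m n : ℕ) :
    ballVol m / ballVol (n + m) =
      Gamma ((m : ℝ) / 2 + 1 + n / 2) / Gamma ((m : ℝ) / 2 + 1) / π ^ ((n : ℝ) / 2) := by
  have hπ : π ^ (((n + m : ℕ) : ℝ) / 2) = π ^ ((n : ℝ) / 2) * π ^ ((m : ℝ) / 2) := by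
    rw [← rpow_add pi_pos]; push_cast; ring_nf
  have harg : ((n + m : ℕ) : ℝ) / 2 + 1 = (m : ℝ) / 2 + 1 + n / 2 := by push_cast; ring
  have := Gamma_pos_of_pos (by positivity : (0 : ℝ) < (m : ℝ) / 2 + 1)
  have := Gamma_pos_of_pos (by positivity : (0 : ℝ) < (m : ℝ) / 2 + 1 + n / 2)
  unfold ballVol
  rw [harg, hπ]
  field_simp

lemma sqrt_le_ballVol_div_rpow {m n : ℕ} (hm : m ≠ 0) (hn : n ≠ 0) :
    √(m / (2 * π)) ≤ (ballVol m / ballVol (n + m)) ^ ((1 : ℝ) / n) := by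
  have hm' : (0 : ℝ) < m := by positivity
  refine sqrt_le_rpow_one_div (by positivity) hn ?_
  have hΓ := Gamma_mul_rpow_le_Gamma_add (by linarith : 1 < (m : ℝ) / 2 + 1)
    (by positivity : (0 : ℝ) ≤ n / 2)
  rw [add_sub_cancel_right] at hΓ
  rw [ballVol_div_ballVol_add, div_div, le_div_iff₀ (by positivity), mul_comm (Gamma _),
    ← mul_assoc, ← mul_rpow (by positivity) pi_pos.le,
    show (m : ℝ) / (2 * π) * π = m / 2 by field_simp, mul_comm]
  exact hΓ

lemma ballVol_div_rpow_le_sqrt (m : ℕ) {n : ℕ} (hn : n ≠ 0) :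
    (ballVol m / ballVol (n + m)) ^ ((1 : ℝ) / n) ≤ √((m + n + 2) / (2 * π)) := by
  refine rpow_one_div_le_sqrt (by positivity) (div_pos (ballVol_pos _) (ballVol_pos _)).le hn ?_
  have hΓ := Gamma_add_le_mul_rpow (by positivity : 0 < (m : ℝ) / 2 + 1)
    (by positivity : (0 : ℝ) ≤ n / 2)
  rw [ballVol_div_ballVol_add, show ((m : ℝ) + n + 2) / (2 * π) = (m / 2 + 1 + n / 2) / π by
    field_simp; ring, div_rpow (by positivity) pi_pos.le]
  gcongr
  rwa [div_le_iff₀ (Gamma_pos_of_pos (by positivity)), mul_comm]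

lemma Cnm_le_one {n m : ℕ} (hn : 2 ≤ n) (hm : m + n + 2 ≤ 6 * n ^ 2) : Cnm n m ≤ 1 := by
  have hn' : (2 : ℝ) ≤ n := by exact_mod_cast hn
  have hm' : (m : ℝ) + n + 2 ≤ 6 * n ^ 2 := by exact_mod_cast hm
  have hroot : (ballVol m / ballVol (n + m)) ^ ((1 : ℝ) / n) ≤ n := by
    refine (ballVol_div_rpow_le_sqrt m (by omega)).trans ?_
    rw [sqrt_le_left (by positivity), div_le_iff₀ (by positivity)]
    nlinarith [pi_gt_three]
  have hfrac : ((m : ℝ) / (n + m)) ^ ((1 : ℝ) / n) ≤ 1 :=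
    rpow_le_one (by positivity) (div_le_one_of_le₀ (by linarith) (by positivity)) (by positivity)
  apply max_le
  · rw [mul_div_mul_comm, mul_rpow (by positivity) (div_pos (ballVol_pos _) (ballVol_pos _)).le]
    calc 1 / (n : ℝ) * (((m : ℝ) / (n + m)) ^ ((1 : ℝ) / n) *
          (ballVol m / ballVol (n + m)) ^ ((1 : ℝ) / n)) ≤ 1 / (n : ℝ) * (1 * n) := by
          gcongr
          exact rpow_nonneg (div_pos (ballVol_pos _) (ballVol_pos _)).le _
      _ = 1 := by field_simp
  · rw [div_le_one (mul_pos (by positivity) (rpow_pos_of_pos (ballVol_pos n) _))]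
    calc (1 : ℝ) ≤ √n := one_le_sqrt.2 (by linarith)
      _ = n * (√n)⁻¹ := by rw [← div_eq_mul_inv, div_sqrt]
      _ ≤ n * ballVol n ^ ((1 : ℝ) / n) := by gcongr; exact inv_sqrt_le_ballVol_rpow hn

lemma sqrt_div_le_Cnm {n m : ℕ} (hn : n ≠ 0) (hnm : n ≤ m) :
    √(m / (2 * π)) / (2 * n) ≤ Cnm n m := by
  have hnm' : (n : ℝ) ≤ m := by exact_mod_cast hnm
  have hfrac : (1 : ℝ) / 2 ≤ ((m : ℝ) / (n + m)) ^ ((1 : ℝ) / n) := by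
    have h1 : (m : ℝ) / (n + m) ≤ 1 := div_le_one_of_le₀ (by linarith) (by positivity)
    refine le_trans ?_ (self_le_rpow_of_le_one (by positivity) h1 ?_)
    · rw [le_div_iff₀ (by positivity)]; linarith
    · rw [div_le_one (by positivity)]; exact_mod_cast Nat.one_le_iff_ne_zero.2 hn
  refine le_trans ?_ (le_max_left _ _)
  rw [mul_div_mul_comm, mul_rpow (by positivity) (div_pos (ballVol_pos _) (ballVol_pos _)).le]
  calc √(m / (2 * π)) / (2 * n) = 1 / (n : ℝ) * (1 / 2 * √(m / (2 * π))) := by ring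
    _ ≤ _ := by
      gcongr
      exact sqrt_le_ballVol_div_rpow (by omega) hn

lemma sq_le_nashBound (n : ℕ) : n ^ 2 ≤ nashBound n :=
  (Nat.le_div_iff_mul_le two_pos).2 (by nlinarith)

lemma nashBound_add_le {n : ℕ} (hn : 2 ≤ n) : nashBound n + n + 2 ≤ 6 * n ^ 2 := by
  have := Nat.div_mul_le_self (3 * n * (n + 3)) 2
  unfold nashBound
  nlinarith

lemma one_sixth_le_Cnm_nashBound {n : ℕ} (hn : n ≠ 0) : 1 / 6 ≤ Cnm n (nashBound n) := by
  have hsq : (n : ℝ) ^ 2 ≤ nashBound n := by exact_mod_cast sq_le_nashBound n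
  refine le_trans ?_
    (sqrt_div_le_Cnm hn ((Nat.le_self_pow two_ne_zero n).trans (sq_le_nashBound n)))
  have hn' : (0 : ℝ) < n := by positivity
  have hroot : (n : ℝ) / 3 ≤ √(nashBound n / (2 * π)) := by
    rw [le_sqrt (by positivity) (by positivity), le_div_iff₀ (by positivity)]
    nlinarith [pi_lt_d2]
  rw [le_div_iff₀ (by positivity)]
  linarith

lemma S2_pos {n : ℕ} (hn : 3 ≤ n) : 0 < S2 n := by
  have hn' : (3 : ℝ) ≤ n := by exact_mod_cast hn
  have hΓn := Gamma_pos_of_pos (by linarith : (0 : ℝ) < n)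
  have hΓhalf := Gamma_pos_of_pos (by linarith : (0 : ℝ) < n / 2)
  unfold S2
  exact mul_pos (div_pos (mul_pos (rpow_pos_of_pos pi_pos _) (by linarith)) (by nlinarith))
    (rpow_pos_of_pos (div_pos hΓn hΓhalf) _)

lemma S2_le {n : ℕ} (hn : 3 ≤ n) : S2 n ≤ 2 / √n := by
  have hn' : (3 : ℝ) ≤ n := by exact_mod_cast hn
  have hΓ : Gamma n / Gamma (n / 2) ≤ (n : ℝ) ^ ((n : ℝ) / 2) := by
    have := Gamma_add_le_mul_rpow (by linarith : (0 : ℝ) < n / 2) (by linarith : (0 : ℝ) ≤ n / 2)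
    rw [add_halves] at this
    rwa [div_le_iff₀ (Gamma_pos_of_pos (by linarith)), mul_comm]
  have hroot : (Gamma n / Gamma (n / 2)) ^ ((1 : ℝ) / n) ≤ √n :=
    rpow_one_div_le_sqrt (by positivity)
      (div_pos (Gamma_pos_of_pos (by linarith)) (Gamma_pos_of_pos (by linarith))).le (by omega) hΓ
  have hπ : π ^ (-(1 : ℝ) / 2) ≤ 1 :=
    rpow_le_one_of_one_le_of_nonpos (by linarith [pi_gt_three]) (by norm_num)
  have hfrac : ((n : ℝ) - 1) / (n * (n - 2)) ≤ 2 / n := by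
    rw [div_le_div_iff₀ (by nlinarith) (by positivity)]
    nlinarith
  unfold S2
  calc π ^ (-(1 : ℝ) / 2) * ((n : ℝ) - 1) / (n * (n - 2)) *
        (Gamma n / Gamma (n / 2)) ^ ((1 : ℝ) / n)
      = π ^ (-(1 : ℝ) / 2) * (((n : ℝ) - 1) / (n * (n - 2))) *
        (Gamma n / Gamma (n / 2)) ^ ((1 : ℝ) / n) := by ring
    _ ≤ 1 * (2 / n) * √n := by
      gcongr
      · exact div_nonneg (by linarith) (by nlinarith)
    _ = 2 / √n := by
      rw [one_mul, div_mul_eq_mul_div, mul_div_assoc, sqrt_div_self', mul_one_div]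

lemma four_pow_div_sqrt_pi_le_MS {n : ℕ} (hn : 2 ≤ n) : 4 ^ (n + 1) / √π ≤ MS n :=
  div_le_div_of_nonneg_left (by positivity) (rpow_pos_of_pos (ballVol_pos n) _)
    (ballVol_rpow_le_sqrt_pi hn)

theorem stmt_13 :
    Filter.Tendsto (fun n : ℕ => MS n / Cnm n (nashBound n)) Filter.atTop Filter.atTop ∧
      Filter.Tendsto (fun n : ℕ => Cnm n (nashBound n) / S2 n) Filter.atTop Filter.atTop := by
  have hC : ∀ n, 3 ≤ n → 0 < Cnm n (nashBound n) := fun n hn =>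
    lt_of_lt_of_le (by norm_num) (one_sixth_le_Cnm_nashBound (by omega))
  constructor
  · have h4 : Tendsto (fun n : ℕ => (4 : ℝ) ^ (n + 1) / √π) atTop atTop :=
      ((tendsto_pow_atTop_atTop_of_one_lt (by norm_num)).comp
        (tendsto_add_atTop_nat 1)).atTop_div_const (sqrt_pos.2 pi_pos)
    refine tendsto_atTop_mono' _ ?_ h4
    filter_upwards [eventually_ge_atTop 3] with n hn
    have hMS := four_pow_div_sqrt_pi_le_MS (n := n) (by omega)
    calc (4 : ℝ) ^ (n + 1) / √π ≤ MS n := hMS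
      _ ≤ MS n / Cnm n (nashBound n) :=
        le_div_self ((by positivity : (0 : ℝ) ≤ 4 ^ (n + 1) / √π).trans hMS) (hC n hn)
          (Cnm_le_one (by omega) (nashBound_add_le (by omega)))
  · have hsqrt : Tendsto (fun n : ℕ => √(n : ℝ) / 12) atTop atTop :=
      (tendsto_sqrt_atTop.comp tendsto_natCast_atTop_atTop).atTop_div_const (by norm_num)
    refine tendsto_atTop_mono' _ ?_ hsqrt
    filter_upwards [eventually_ge_atTop 3] with n hn
    have hn' : (0 : ℝ) < √n := sqrt_pos.2 (by positivity)
    calc √(n : ℝ) / 12 = (1 / 6) / (2 / √n) := by field_simp; ring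
      _ ≤ Cnm n (nashBound n) / S2 n :=
        div_le_div₀ (hC n hn).le (one_sixth_le_Cnm_nashBound (by omega)) (S2_pos hn) (S2_le hn)
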